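/- Let A be a Hermitian n×n complex matrix with A² = 1 and let θ ∈ [0, π/2]. Then the positive semidefinite square root of (1 + sin θ • A)/2 equals (cos(θ/2) • 1 + sin(θ/2) • A)/√2. -/

import Mathlib

open ComplexOrder

/-- The positive semidefinite square root of a positive semidefinite matrix
(the definition removed from Mathlib, restored with its old meaning). -/
noncomputable def Matrix.PosSemidef.sqrt {n 𝕜 : Type*} [Fintype n] [DecidableEq n] [RCLike 𝕜]
    {A : Matrix n n 𝕜} (hA : A.PosSemidef) : Matrix n n 𝕜 :=
  hA.1.eigenvectorUnitary.1 * Matrix.diagonal ((↑) ∘ (√·) ∘ hA.1.eigenvalues) *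
    (star hA.1.eigenvectorUnitary : Matrix n n 𝕜)

open ComplexOrder Matrix

open scoped MatrixOrder in
lemma psd_eq_sqrt_of_sq_eq {n : ℕ} {M B : Matrix (Fin n) (Fin n) ℂ} (hM : M.PosSemidef)
    (hB : B.PosSemidef) (h : B ^ 2 = M) : B = hM.sqrt := by
  have h1 : hM.sqrt = CFC.sqrt M := by
    rw [CFC.sqrt_eq_real_sqrt M hM.nonneg, cfcₙ_eq_cfc, hM.1.cfc_eq]
    rfl
  rw [h1, eq_comm, CFC.sqrt_eq_iff M B hM.nonneg hB.nonneg, ← sq, h]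

lemma psd_smul_real {n : ℕ} {M : Matrix (Fin n) (Fin n) ℂ} (hM : M.PosSemidef)
    {r : ℝ} (hr : 0 ≤ r) : ((r : ℂ) • M).PosSemidef := by
  constructor
  · unfold Matrix.IsHermitian
    rw [Matrix.conjTranspose_smul, hM.1.eq]
    congr 1
    simp
  · have h0 : (0:ℂ) ≤ (r:ℂ) := by exact_mod_cast hr
    exact (hM.smul h0).2

lemma psd_one_add {n : ℕ} (A : Matrix (Fin n) (Fin n) ℂ) (hA : A.IsHermitian)
    (hA2 : A * A = 1) : ((1 : Matrix (Fin n) (Fin n) ℂ) + A).PosSemidef := by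
  have h : (1 + A) = (((1/2 : ℝ) : ℂ)) • ((1 + A)ᴴ * ((1 : Matrix (Fin n) (Fin n) ℂ) + A)) := by
    rw [Matrix.conjTranspose_add, Matrix.conjTranspose_one, hA.eq]
    rw [add_mul, mul_add, mul_add, hA2]
    simp only [one_mul, mul_one]
    have : (1 : Matrix (Fin n) (Fin n) ℂ) + A + (A + 1) = (2:ℂ) • (1 + A) := by
      rw [two_smul]; abel
    rw [this, smul_smul]
    push_cast
    norm_num
  rw [h]
  exact psd_smul_real (Matrix.posSemidef_conjTranspose_mul_self _) (by norm_num)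

theorem sqrt_dichotomic_kraus
    {n : ℕ} (A : Matrix (Fin n) (Fin n) ℂ) (hA : A.IsHermitian) (hA2 : A * A = 1)
    (θ : ℝ) (hθ : θ ∈ Set.Icc 0 (Real.pi / 2))
    (hP : ((1 / 2 : ℂ) • ((1 : Matrix (Fin n) (Fin n) ℂ)
        + (Real.sin θ : ℂ) • A)).PosSemidef) :
    hP.sqrt = (1 / (Real.sqrt 2 : ℂ)) •
      ((Real.cos (θ / 2) : ℂ) • (1 : Matrix (Fin n) (Fin n) ℂ)
        + (Real.sin (θ / 2) : ℂ) • A) := by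
  obtain ⟨hθ0, hθ1⟩ := hθ
  set c := Real.cos (θ / 2) with hc
  set s := Real.sin (θ / 2) with hs
  have hpi : (0:ℝ) < Real.pi := Real.pi_pos
  have hs0 : 0 ≤ s := Real.sin_nonneg_of_nonneg_of_le_pi (by linarith) (by linarith)
  have hc0 : 0 ≤ c := Real.cos_nonneg_of_mem_Icc ⟨by linarith, by linarith⟩
  have hsc : s ≤ c := by
    rw [hs, hc, ← Real.cos_pi_div_two_sub]
    apply Real.cos_le_cos_of_nonneg_of_le_pi (by linarith) (by linarith) (by linarith)
  set B : Matrix (Fin n) (Fin n) ℂ := (1 / (Real.sqrt 2 : ℂ)) •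
      ((c : ℂ) • (1 : Matrix (Fin n) (Fin n) ℂ) + (s : ℂ) • A) with hB
  have hAm : ((1 : Matrix (Fin n) (Fin n) ℂ) - A).PosSemidef := by
    have := psd_one_add (-A) (by simpa using hA.neg) (by rw [neg_mul_neg, hA2])
    simpa [sub_eq_add_neg] using this
  have hAp := psd_one_add A hA hA2
  have hs2 : (0:ℝ) < Real.sqrt 2 := Real.sqrt_pos.mpr (by norm_num)
  have hne : (Real.sqrt 2 : ℂ) ≠ 0 := by exact_mod_cast (ne_of_gt hs2)
  have hBdecomp : B = (((c + s) / (2 * Real.sqrt 2) : ℝ) : ℂ) • (1 + A)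
      + (((c - s) / (2 * Real.sqrt 2) : ℝ) : ℂ) • (1 - A) := by
    rw [hB]
    push_cast
    match_scalars <;> (field_simp; try ring)
  have hBpsd : B.PosSemidef := by
    rw [hBdecomp]
    exact (psd_smul_real hAp (by positivity)).add
      (psd_smul_real hAm (div_nonneg (by linarith) (by positivity)))
  have hcs : (c:ℂ)^2 + (s:ℂ)^2 = 1 := by
    have := Real.sin_sq_add_cos_sq (θ/2)
    rw [← hs, ← hc] at this
    exact_mod_cast (by linarith : c^2 + s^2 = (1:ℝ))
  have hsinR : Real.sin θ = 2 * s * c := by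
    rw [hs, hc, ← Real.sin_two_mul]
    congr 1
    ring
  have hsin : (Real.sin θ : ℂ) = 2 * (s:ℂ) * (c:ℂ) := by exact_mod_cast hsinR
  have hcoef : (1 / (Real.sqrt 2 : ℂ)) * (1 / (Real.sqrt 2 : ℂ)) = 1/2 := by
    rw [div_mul_div_comm, one_mul, ← sq, ← Complex.ofReal_pow,
      Real.sq_sqrt (by norm_num : (0:ℝ) ≤ 2)]
    norm_num
  have expand : ((c:ℂ) • (1 : Matrix (Fin n) (Fin n) ℂ) + (s:ℂ) • A)
      * ((c:ℂ) • (1 : Matrix (Fin n) (Fin n) ℂ) + (s:ℂ) • A)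
      = ((c:ℂ)^2 + (s:ℂ)^2) • (1 : Matrix (Fin n) (Fin n) ℂ) + (2 * (s:ℂ) * (c:ℂ)) • A := by
    rw [add_mul, mul_add, mul_add]
    simp only [Matrix.smul_mul, Matrix.mul_smul, smul_smul, one_mul, mul_one, hA2]
    module
  have hsq : B ^ 2 = (1 / 2 : ℂ) • ((1 : Matrix (Fin n) (Fin n) ℂ)
      + (Real.sin θ : ℂ) • A) := by
    rw [hB, sq, Matrix.smul_mul, Matrix.mul_smul, smul_smul, hcoef, expand, hcs, one_smul, hsin]
  exact (psd_eq_sqrt_of_sq_eq hP hBpsd hsq).symm
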